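/- If a decorated Gauss diagram is admissible (every nontrivial orientation-respecting loop has strictly positive homology class), then it has a positive refinement: an assignment of non-negative integers to its edges, not all zero, realizing all valuations, such that moreover every nontrivial orientation-respecting loop meets a positive edge. (It follows from weak admissibility giving a non-negative refinement, plus positivity of the circle's class forcing at least one positive marking.) -/

import Mathlib

/-- A Gauss diagram with `n` arrows: the `2n` arrow endpoints are the points of the cyclic group
`ZMod (2*n)` (listed in the cyclic order of the oriented circle), and arrow `a` points from its
underpass point `tail a` to its overpass point `head a`.  The edge `e` of the diagram is the arc
of the circle from the point `e` to the point `e + 1`. -/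
structure GaussDiagram (n : ℕ) where
  head : Fin n → ZMod (2 * n)
  tail : Fin n → ZMod (2 * n)
  inj : Function.Injective (Sum.elim head tail)

namespace GaussDiagram

variable {n : ℕ}

/-- The edge-characteristic vector of the distinguished loop of arrow `a`: it traverses the
edges from `head a` to `tail a` along the orientation of the circle (and returns along the
arrow). -/
def arcChain (G : GaussDiagram n) (a : Fin n) : ZMod (2 * n) → ℤ :=
  fun e => if (e - G.head a).val < (G.tail a - G.head a).val then 1 else 0

/-- The `(n+1) × 2n` matrix whose rows are the edge-characteristic vectors of the `n`
distinguished loops together with the full circle (the all-ones row, indexed by `none`). -/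
def loopMatrix (G : GaussDiagram n) : Matrix (Option (Fin n)) (ZMod (2 * n)) ℤ :=
  fun r e => r.elim 1 fun a => G.arcChain a e

/-- The elementary refinement move of type II+ at arrow `a`: add `+1` on the edge directly
following each endpoint of `a` and `-1` on the edge directly preceding it (with multiplicity). -/
def moveVec (G : GaussDiagram n) (a : Fin n) : ZMod (2 * n) → ℤ :=
  fun e => (if e = G.head a then 1 else 0) + (if e = G.tail a then 1 else 0)
    - (if e = G.head a - 1 then 1 else 0) - (if e = G.tail a - 1 then 1 else 0)

/-- The edge `e` (from point `e` to point `e+1`) is adjacent to the arrow `a` if one of its two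
boundary points is an endpoint of `a`. -/
def adjacent (G : GaussDiagram n) (e : ZMod (2 * n)) (a : Fin n) : Prop :=
  e = G.head a ∨ e + 1 = G.head a ∨ e = G.tail a ∨ e + 1 = G.tail a

end GaussDiagram

/-- A move of a loop in a Gauss diagram: either follow the next edge of the circle in the
direction of its orientation (`circ`), or jump along an arrow, in either direction. -/
inductive Move (n : ℕ) where
  | circ : Move n
  | jumpHT : Fin n → Move n
  | jumpTH : Fin n → Move n

/-- Whether a move is a jump along an arrow. -/
def Move.isJump {n : ℕ} : Move n → Prop
  | .circ => False
  | _ => True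

namespace GaussDiagram

/-- The point reached by performing one move starting at the point `p`. -/
def target (G : GaussDiagram n) (p : ZMod (2 * n)) : Move n → ZMod (2 * n)
  | .circ => p + 1
  | .jumpHT a => G.tail a
  | .jumpTH a => G.head a

/-- Validity of a sequence of moves starting at `p`: a jump along an arrow may only be performed
from an endpoint of that arrow. -/
def validFrom (G : GaussDiagram n) : ZMod (2 * n) → List (Move n) → Prop
  | _, [] => True
  | p, mv :: r =>
      (match mv with
        | .circ => True
        | .jumpHT a => p = G.head a
        | .jumpTH a => p = G.tail a) ∧ validFrom G (G.target p mv) r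

/-- The point reached after performing a sequence of moves from `p`. -/
def run (G : GaussDiagram n) : ZMod (2 * n) → List (Move n) → ZMod (2 * n)
  | p, [] => p
  | p, mv :: r => run G (G.target p mv) r

/-- A loop in the Gauss diagram which respects the orientation of the circle: a closed valid
sequence of moves (circle arcs are always traversed in the orientation direction, arrows may be
traversed both ways). -/
structure Loop (G : GaussDiagram n) where
  start : ZMod (2 * n)
  moves : List (Move n)
  valid : G.validFrom start moves
  closed : G.run start moves = start

/-- A loop is *reduced* (nontrivial) if it is nonempty and never backtracks: no two cyclically
consecutive moves are jumps (two consecutive jumps necessarily cancel along the same arrow). -/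
def Loop.Reduced {G : GaussDiagram n} (L : Loop G) : Prop :=
  L.moves ≠ [] ∧
  L.moves.Chain' (fun m₁ m₂ => ¬(m₁.isJump ∧ m₂.isJump)) ∧
  ∀ m₁ ∈ L.moves.getLast?, ∀ m₂ ∈ L.moves.head?, ¬(m₁.isJump ∧ m₂.isJump)

/-- Whether a sequence of moves from `p` meets a marking of the marking function `m` (which
records the number of (positive) markings on each edge). -/
def meetsFrom (G : GaussDiagram n) (m : ZMod (2 * n) → ℕ) :
    ZMod (2 * n) → List (Move n) → Prop
  | _, [] => False
  | p, .circ :: r => 0 < m p ∨ meetsFrom G m (p + 1) r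
  | _, .jumpHT a :: r => meetsFrom G m (G.tail a) r
  | _, .jumpTH a :: r => meetsFrom G m (G.head a) r

/-- A loop meets a marking if one of the circle arcs it traverses carries a marking. -/
def Loop.Meets {G : GaussDiagram n} (m : ZMod (2 * n) → ℕ) (L : Loop G) : Prop :=
  G.meetsFrom m L.start L.moves

/-- In the diagram obtained by deleting the arrows of `R`, the point `p` is directly preceded by
a marking: going backwards along the circle from `p` one finds a marking before meeting any
endpoint of a non-deleted arrow. -/
def precededBy (G : GaussDiagram n) (m : ZMod (2 * n) → ℕ) (R : Set (Fin n))
    (p : ZMod (2 * n)) : Prop :=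
  ∃ j : ℕ, 0 < m (p - 1 - (j : ZMod (2 * n))) ∧
    ∀ i < j, ∃ a ∈ R, G.head a = p - 1 - (i : ZMod (2 * n)) ∨
      G.tail a = p - 1 - (i : ZMod (2 * n))

/-- The set of arrows removed after `k` rounds of deleting the arrows of level `1` (those whose
two endpoints are both directly preceded by a marking in the current diagram). -/
def removedAt (G : GaussDiagram n) (m : ZMod (2 * n) → ℕ) : ℕ → Set (Fin n)
  | 0 => ∅
  | k + 1 => removedAt G m k ∪
      {a | G.precededBy m (removedAt G m k) (G.head a) ∧
           G.precededBy m (removedAt G m k) (G.tail a)}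

/-- An arrow has a well-defined level if it is eventually deleted in the level process. -/
def HasLevel (G : GaussDiagram n) (m : ZMod (2 * n) → ℕ) (a : Fin n) : Prop :=
  ∃ k, a ∈ G.removedAt m k

/-- The number of times a sequence of moves from `p` traverses each edge of the circle. -/
def edgeCount (G : GaussDiagram n) : ZMod (2 * n) → List (Move n) → ZMod (2 * n) → ℤ
  | _, [] => 0
  | p, .circ :: r => fun e => (if e = p then 1 else 0) + edgeCount G (p + 1) r e
  | _, .jumpHT a :: r => edgeCount G (G.tail a) r
  | _, .jumpTH a :: r => edgeCount G (G.head a) r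

/-- The net number of traversals of each arrow, counted positively in the tail-to-head
direction (the direction used by the distinguished loops). -/
def netJump {n : ℕ} : List (Move n) → Fin n → ℤ
  | [] => 0
  | .circ :: r => netJump r
  | .jumpHT a :: r => fun b => netJump r b - (if b = a then 1 else 0)
  | .jumpTH a :: r => fun b => (if b = a then 1 else 0) + netJump r b

/-- `y` is a refinement of the decorated Gauss diagram with arrow valuations `dA` and circle
valuation `d`: the sum of the markings along each distinguished loop is the corresponding
valuation, and the total sum is the valuation of the circle. -/
def IsRefinement [NeZero (2 * n)] (G : GaussDiagram n) (dA : Fin n → ℤ) (d : ℤ)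
    (y : ZMod (2 * n) → ℤ) : Prop :=
  (∀ a, ∑ e, G.arcChain a e * y e = dA a) ∧ ∑ e, y e = d

/-- The homology class in `H₁(ℝ × S¹) = ℤ` of a loop of the decorated Gauss diagram with arrow
valuations `dA` and circle valuation `d`, computed by expressing the cycle of the loop in the
basis formed by the distinguished loops and the circle. -/
def loopClass [NeZero (2 * n)] (G : GaussDiagram n) (dA : Fin n → ℤ) (d : ℤ)
    (L : Loop G) : ℤ :=
  ∑ a, netJump L.moves a * dA a +
    (G.edgeCount L.start L.moves 0 - ∑ a, netJump L.moves a * G.arcChain a 0) * d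

end GaussDiagram


/-!
Give every move a weight `w` so that the weight of a loop is its homology class. Backtracks
along arrows cost nothing, so cancelling them shows that admissibility makes every closed walk
of nonnegative weight. Hence the least weight `f q` of a walk from `0` to `q` is finite, jumps
are tight for `f` in both directions, and the slacks `y e = f e + w e - f (e + 1)` of the circle
edges are nonnegative markings. Along an arc the slacks telescope, which makes `y` a refinement.
A loop meeting no positive marking uses only tight moves, so its class is
`f (start) - f (start) = 0 < 1`; for the circle this gives `y ≠ 0`.
-/

open Finset

lemma ZMod.sum_ite_val_lt {N : ℕ} [NeZero N] {M : Type*} [AddCommMonoid M] (g : ZMod N → M)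
    {k : ℕ} (hk : k ≤ N) :
    ∑ u : ZMod N, (if u.val < k then g u else 0) = ∑ j ∈ range k, g j := by
  rw [← sum_filter]
  refine sum_nbij' ZMod.val Nat.cast (by simp) (fun j hj => ?_) (by simp) (fun j hj => ?_) (by simp)
  all_goals
    have hj := mem_range.1 hj
    simp [ZMod.val_cast_of_lt (hj.trans_le hk), hj]

namespace GaussDiagram

variable {n : ℕ} (G : GaussDiagram n)

section Walks

def MoveValid (p : ZMod (2 * n)) : Move n → Prop
  | .circ => True
  | .jumpHT a => p = G.head a
  | .jumpTH a => p = G.tail a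

variable {G}

@[simp]
lemma validFrom_cons {p : ZMod (2 * n)} {mv : Move n} {l : List (Move n)} :
    G.validFrom p (mv :: l) ↔ G.MoveValid p mv ∧ G.validFrom (G.target p mv) l := by
  cases mv <;> rfl

@[simp]
lemma run_nil (p : ZMod (2 * n)) : G.run p [] = p := rfl

@[simp]
lemma run_cons (p : ZMod (2 * n)) (mv : Move n) (l : List (Move n)) :
    G.run p (mv :: l) = G.run (G.target p mv) l := rfl

@[simp]
lemma run_append (p : ZMod (2 * n)) (l₁ l₂ : List (Move n)) :
    G.run p (l₁ ++ l₂) = G.run (G.run p l₁) l₂ := by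
  induction l₁ generalizing p <;> simp [*]

@[simp]
lemma validFrom_append {p : ZMod (2 * n)} {l₁ l₂ : List (Move n)} :
    G.validFrom p (l₁ ++ l₂) ↔ G.validFrom p l₁ ∧ G.validFrom (G.run p l₁) l₂ := by
  induction l₁ generalizing p with
  | nil => exact (true_and _).symm.to_iff
  | cons mv l ih => simp [ih, and_assoc]

lemma validFrom_replicate_circ (p : ZMod (2 * n)) (k : ℕ) :
    G.validFrom p (List.replicate k .circ) := by
  induction k generalizing p with
  | zero => trivial
  | succ k ih => exact validFrom_cons.2 ⟨trivial, ih _⟩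

@[simp]
lemma run_replicate_circ (p : ZMod (2 * n)) (k : ℕ) :
    G.run p (List.replicate k .circ) = p + k := by
  induction k generalizing p with
  | zero => simp
  | succ k ih => simp [List.replicate_succ, target, ih, add_assoc, add_comm (1 : ZMod (2 * n))]

variable (G)

lemma head_ne_tail (a b : Fin n) : G.head a ≠ G.tail b := fun h => by
  simpa using G.inj (a₁ := .inl a) (a₂ := .inr b) h

lemma head_injective : Function.Injective G.head := fun a b h => by
  simpa using G.inj (a₁ := .inl a) (a₂ := .inl b) h

lemma tail_injective : Function.Injective G.tail := fun a b h => by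
  simpa using G.inj (a₁ := .inr a) (a₂ := .inr b) h

lemma target_ne_of_isJump {p : ZMod (2 * n)} {mv : Move n} (hmv : G.MoveValid p mv)
    (hj : mv.isJump) : G.target p mv ≠ p := by
  cases mv with
  | circ => exact hj.elim
  | jumpHT a => exact fun h => G.head_ne_tail a a (hmv ▸ h).symm
  | jumpTH a => exact fun h => G.head_ne_tail a a (hmv ▸ h)

end Walks

section Weights

variable (w : ZMod (2 * n) → Move n → ℤ)

def walkWeight : ZMod (2 * n) → List (Move n) → ℤ
  | _, [] => 0
  | p, mv :: l => w p mv + walkWeight (G.target p mv) l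

@[simp]
lemma walkWeight_nil (p : ZMod (2 * n)) : G.walkWeight w p [] = 0 := rfl

@[simp]
lemma walkWeight_cons (p : ZMod (2 * n)) (mv : Move n) (l : List (Move n)) :
    G.walkWeight w p (mv :: l) = w p mv + G.walkWeight w (G.target p mv) l := rfl

@[simp]
lemma walkWeight_append (p : ZMod (2 * n)) (l₁ l₂ : List (Move n)) :
    G.walkWeight w p (l₁ ++ l₂) = G.walkWeight w p l₁ + G.walkWeight w (G.run p l₁) l₂ := by
  induction l₁ generalizing p <;> simp [*, add_assoc]

def ClosedWalksNonneg : Prop :=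
  ∀ p l, G.validFrom p l → G.run p l = p → 0 ≤ G.walkWeight w p l

def JumpsCancel : Prop :=
  ∀ a, w (G.head a) (.jumpHT a) + w (G.tail a) (.jumpTH a) = 0

variable {G w}

lemma jump_jump_cancel (hw : G.JumpsCancel w)
    {p : ZMod (2 * n)} {m₁ m₂ : Move n} (h₁ : G.MoveValid p m₁) (j₁ : m₁.isJump)
    (h₂ : G.MoveValid (G.target p m₁) m₂) (j₂ : m₂.isJump) :
    G.target (G.target p m₁) m₂ = p ∧ w p m₁ + w (G.target p m₁) m₂ = 0 := by
  cases m₁ with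
  | circ => exact j₁.elim
  | jumpHT a =>
    cases m₂ with
    | circ => exact j₂.elim
    | jumpHT b => exact (G.head_ne_tail b a h₂.symm).elim
    | jumpTH b =>
      obtain rfl := G.tail_injective h₂
      subst h₁
      exact ⟨rfl, hw a⟩
  | jumpTH a =>
    cases m₂ with
    | circ => exact j₂.elim
    | jumpHT b =>
      obtain rfl := G.head_injective h₂
      subst h₁
      exact ⟨rfl, (add_comm _ _).trans (hw a)⟩
    | jumpTH b => exact (G.head_ne_tail a b h₂).elim

lemma cancel_jump_pair (hw : G.JumpsCancel w)
    {p : ZMod (2 * n)} {l₁ l₂ : List (Move n)} {m₁ m₂ : Move n}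
    (hv : G.validFrom p (l₁ ++ m₁ :: m₂ :: l₂)) (j₁ : m₁.isJump) (j₂ : m₂.isJump) :
    G.validFrom p (l₁ ++ l₂) ∧ G.run p (l₁ ++ l₂) = G.run p (l₁ ++ m₁ :: m₂ :: l₂) ∧
      G.walkWeight w p (l₁ ++ l₂) = G.walkWeight w p (l₁ ++ m₁ :: m₂ :: l₂) := by
  simp only [validFrom_append, validFrom_cons] at hv
  obtain ⟨hv₁, h₁, h₂, hv₂⟩ := hv
  obtain ⟨htarget, hweight⟩ := jump_jump_cancel hw h₁ j₁ h₂ j₂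
  rw [htarget] at hv₂
  refine ⟨validFrom_append.2 ⟨hv₁, hv₂⟩, by simp [htarget], ?_⟩
  simp only [walkWeight_append, walkWeight_cons, htarget]
  linarith

lemma cancel_wrapping_jump_pair (hw : G.JumpsCancel w)
    {p : ZMod (2 * n)} {m₁ m₂ : Move n} {l : List (Move n)}
    (hv : G.validFrom p (m₂ :: (l ++ [m₁]))) (hc : G.run p (m₂ :: (l ++ [m₁])) = p)
    (j₁ : m₁.isJump) (j₂ : m₂.isJump) :
    G.validFrom (G.target p m₂) l ∧ G.run (G.target p m₂) l = G.target p m₂ ∧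
      G.walkWeight w (G.target p m₂) l = G.walkWeight w p (m₂ :: (l ++ [m₁])) := by
  simp only [validFrom_cons, validFrom_append] at hv
  obtain ⟨h₂, hvl, h₁, -⟩ := hv
  simp only [run_cons, run_append, run_nil] at hc
  obtain ⟨htarget, hweight⟩ := jump_jump_cancel hw h₁ j₁ (hc.symm ▸ h₂) j₂
  rw [hc] at htarget hweight
  refine ⟨hvl, htarget.symm, ?_⟩
  simp only [walkWeight_cons, walkWeight_append, walkWeight_nil, hc]
  linarith

/-- Cancelling backtracks along arrows, inside the walk or across its endpoint, turns every
closed walk into a reduced loop or the empty walk without changing its weight. -/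
theorem closedWalksNonneg_of_reduced (hw : G.JumpsCancel w)
    (hred : ∀ L : G.Loop, L.Reduced → 0 ≤ G.walkWeight w L.start L.moves) :
    G.ClosedWalksNonneg w := by
  intro p l hv hc
  induction hlen : l.length using Nat.strong_induction_on generalizing p l with
  | _ k ih =>
  by_cases hchain : l.IsChain fun m₁ m₂ => ¬(m₁.isJump ∧ m₂.isJump)
  · rcases l with _ | ⟨m₂, t⟩
    · exact le_rfl
    by_cases hends : ∀ m₁ ∈ (m₂ :: t).getLast?, ∀ m ∈ (m₂ :: t).head?, ¬(m₁.isJump ∧ m.isJump)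
    · exact hred ⟨p, _, hv, hc⟩ ⟨List.cons_ne_nil _ _, hchain, hends⟩
    simp only [List.head?_cons, Option.mem_some_iff, forall_eq', not_forall, not_not] at hends
    obtain ⟨m₁, hm₁, j₁, j₂⟩ := hends
    rcases t.eq_nil_or_concat' with rfl | ⟨t, m₁', rfl⟩
    · obtain rfl : m₂ = m₁ := by simpa using hm₁
      exact (G.target_ne_of_isJump (validFrom_cons.1 hv).1 j₁ hc).elim
    obtain rfl : m₁' = m₁ := by simpa [List.getLast?_cons] using hm₁
    obtain ⟨hv', hc', hw'⟩ := cancel_wrapping_jump_pair hw hv hc j₁ j₂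
    rw [← hw']
    exact ih _ (by simp [← hlen]) _ _ hv' hc' rfl
  · rw [List.isChain_iff_forall_rel_of_append_cons_cons] at hchain
    push Not at hchain
    obtain ⟨m₁, m₂, l₁, l₂, rfl, j₁, j₂⟩ := hchain
    obtain ⟨hv', hc', hw'⟩ := cancel_jump_pair hw hv j₁ j₂
    rw [← hw']
    exact ih _ (by simp [← hlen]) _ _ hv' (hc'.trans hc) rfl

variable (G w)

def reachWeights (q : ZMod (2 * n)) : Set ℤ :=
  {x | ∃ l, G.validFrom 0 l ∧ G.run 0 l = q ∧ G.walkWeight w 0 l = x}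

/-- Junk value `0` when the weights are unbounded below; `ClosedWalksNonneg` excludes this. -/
noncomputable def potential (q : ZMod (2 * n)) : ℤ :=
  sInf (G.reachWeights w q)

variable {G w} [NeZero (2 * n)]

lemma reachWeights_nonempty (q : ZMod (2 * n)) : (G.reachWeights w q).Nonempty :=
  ⟨_, List.replicate q.val .circ, validFrom_replicate_circ 0 _, by simp, rfl⟩

lemma bddBelow_reachWeights (hcl : G.ClosedWalksNonneg w) (q : ZMod (2 * n)) :
    BddBelow (G.reachWeights w q) := by
  set back := List.replicate (-q).val Move.circ
  refine ⟨-G.walkWeight w q back, ?_⟩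
  rintro _ ⟨l, hv, rfl, rfl⟩
  have := hcl 0 (l ++ back) (validFrom_append.2 ⟨hv, validFrom_replicate_circ _ _⟩) (by simp [back])
  simp only [walkWeight_append] at this
  linarith

lemma potential_mem_reachWeights (hcl : G.ClosedWalksNonneg w) (q : ZMod (2 * n)) :
    G.potential w q ∈ G.reachWeights w q :=
  Int.csInf_mem (reachWeights_nonempty q) (bddBelow_reachWeights hcl q)

lemma potential_target_le (hcl : G.ClosedWalksNonneg w) {q : ZMod (2 * n)} {mv : Move n}
    (hmv : G.MoveValid q mv) : G.potential w (G.target q mv) ≤ G.potential w q + w q mv := by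
  obtain ⟨l, hv, hr, hw⟩ := potential_mem_reachWeights hcl q
  refine csInf_le (bddBelow_reachWeights hcl _) ⟨l ++ [mv], ?_, by simp [hr], by simp [hr, hw]⟩
  exact validFrom_append.2 ⟨hv, hr ▸ validFrom_cons.2 ⟨hmv, trivial⟩⟩

lemma potential_target_of_isJump (hcl : G.ClosedWalksNonneg w)
    (hw : G.JumpsCancel w)
    {q : ZMod (2 * n)} {mv : Move n} (hmv : G.MoveValid q mv) (hj : mv.isJump) :
    G.potential w (G.target q mv) = G.potential w q + w q mv := by
  cases mv with
  | circ => exact hj.elim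
  | jumpHT a | jumpTH a =>
    subst hmv
    have := potential_target_le hcl (mv := .jumpTH a) rfl
    have := potential_target_le hcl (mv := .jumpHT a) rfl
    simp only [target] at *
    linarith [hw a]

omit [NeZero (2 * n)] in
lemma walkWeight_eq_of_not_meetsFrom (f : ZMod (2 * n) → ℤ) (m : ZMod (2 * n) → ℕ)
    (hjump : ∀ p mv, G.MoveValid p mv → mv.isJump → f (G.target p mv) = f p + w p mv)
    (hcirc : ∀ p, m p = 0 → f (p + 1) = f p + w p .circ) {p : ZMod (2 * n)}
    {l : List (Move n)} (hv : G.validFrom p l) (hm : ¬G.meetsFrom m p l) :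
    G.walkWeight w p l = f (G.run p l) - f p := by
  induction l generalizing p with
  | nil => simp
  | cons mv l ih =>
    obtain ⟨hmv, hv⟩ := validFrom_cons.1 hv
    have hstep : f (G.target p mv) = f p + w p mv := by
      cases mv with
      | circ => exact hcirc p (by simp_all [meetsFrom])
      | jumpHT a => exact hjump p _ hmv trivial
      | jumpTH a => exact hjump p _ hmv trivial
    have hm' : ¬G.meetsFrom m (G.target p mv) l := by
      cases mv <;> simp_all [meetsFrom, target]
    rw [walkWeight_cons, ih hv hm', run_cons]
    linarith

end Weights

section Valuations

variable (dA : Fin n → ℤ) (d : ℤ)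

def arrowWeight (a : Fin n) : ℤ := dA a - d * G.arcChain a 0

/-- Crossing the edge `0` contributes the class `d` of the circle, and jumping along `a` from tail
to head contributes the class of the distinguished loop of `a` minus the part of it that crosses
the edge `0`: summed along a loop this gives its class. -/
def moveWeight : ZMod (2 * n) → Move n → ℤ
  | p, .circ => if p = 0 then d else 0
  | _, .jumpHT a => -G.arrowWeight dA d a
  | _, .jumpTH a => G.arrowWeight dA d a

lemma jumpsCancel_moveWeight : G.JumpsCancel (G.moveWeight dA d) :=
  fun _ => neg_add_cancel _

lemma walkWeight_moveWeight (p : ZMod (2 * n)) (l : List (Move n)) :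
    G.walkWeight (G.moveWeight dA d) p l =
      ∑ a, netJump l a * G.arrowWeight dA d a + d * G.edgeCount p l 0 := by
  induction l generalizing p with
  | nil => simp [netJump, edgeCount]
  | cons mv l ih =>
    cases mv with
    | circ =>
      rcases eq_or_ne p 0 with rfl | hp
      · simp only [walkWeight_cons, moveWeight, ↓reduceIte, target, zero_add, ih, netJump,
          edgeCount]
        ring
      · simp [ih, netJump, edgeCount, moveWeight, target, hp, hp.symm]
    | jumpHT a =>
      simp only [walkWeight_cons, moveWeight, target, ih, netJump, sub_mul, ite_mul, one_mul,
        zero_mul, sum_sub_distrib, sum_ite_eq', mem_univ, ↓reduceIte, edgeCount]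
      ring
    | jumpTH a =>
      simp only [walkWeight_cons, moveWeight, target, ih, netJump, add_mul, ite_mul, one_mul,
        zero_mul, sum_add_distrib, sum_ite_eq', mem_univ, ↓reduceIte, edgeCount]
      ring

lemma loopClass_eq_walkWeight [NeZero (2 * n)] (L : G.Loop) :
    G.loopClass dA d L = G.walkWeight (G.moveWeight dA d) L.start L.moves := by
  simp only [walkWeight_moveWeight, loopClass, arrowWeight, mul_sub, sum_sub_distrib,
    sub_mul, sum_mul]
  ring_nf

variable [NeZero (2 * n)]

lemma sum_arcChain_mul (a : Fin n) (y : ZMod (2 * n) → ℤ) :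
    ∑ e, G.arcChain a e * y e = ∑ j ∈ range (G.tail a - G.head a).val, y (G.head a + j) := by
  rw [← ZMod.sum_ite_val_lt (fun u => y (G.head a + u)) (ZMod.val_lt _).le,
    ← Equiv.sum_comp (Equiv.addLeft (G.head a)) (fun e => G.arcChain a e * y e)]
  simp [arcChain]

lemma isRefinement_slack (f : ZMod (2 * n) → ℤ)
    (hjump : ∀ a, f (G.head a) = f (G.tail a) + G.arrowWeight dA d a) :
    G.IsRefinement dA d (fun e => f e - f (e + 1) + G.moveWeight dA d e .circ) := by
  refine ⟨fun a => ?_, ?_⟩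
  · have htel : ∑ j ∈ range (G.tail a - G.head a).val,
        (f (G.head a + j) - f (G.head a + j + 1)) = f (G.head a) - f (G.tail a) := by
      simpa [add_assoc] using
        sum_range_sub' (fun j : ℕ => f (G.head a + j)) (G.tail a - G.head a).val
    have hcirc : ∑ e, G.arcChain a e * G.moveWeight dA d e .circ = G.arcChain a 0 * d := by
      simp [moveWeight]
    rw [sum_arcChain_mul] at hcirc ⊢
    rw [sum_add_distrib, htel, hcirc, hjump, arrowWeight]
    ring
  · have htel : ∑ e : ZMod (2 * n), (f e - f (e + 1)) = 0 := by
      rw [sum_sub_distrib, Fintype.sum_equiv (Equiv.addRight 1) (fun e => f (e + 1)) f fun _ => rfl,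
        sub_self]
    simp [sum_add_distrib, htel, moveWeight]

end Valuations

def circleLoop : G.Loop :=
  ⟨0, List.replicate (2 * n) .circ, validFrom_replicate_circ 0 _, by simp⟩

lemma circleLoop_reduced [NeZero (2 * n)] : G.circleLoop.Reduced := by
  refine ⟨by simp [circleLoop, NeZero.ne], List.isChain_replicate_of_rel _ fun h => h.1, ?_⟩
  intro m₁ h₁ _ _ hj
  rw [List.eq_of_mem_replicate (List.mem_of_mem_getLast? h₁)] at hj
  exact hj.1

lemma not_meetsFrom_zero (p : ZMod (2 * n)) (l : List (Move n)) :
    ¬G.meetsFrom (fun _ => 0) p l := by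
  induction l generalizing p with
  | nil => exact id
  | cons mv l ih => cases mv <;> simp [meetsFrom, ih]

end GaussDiagram

/-- An admissible decorated Gauss diagram (every nontrivial orientation-respecting loop has
homology class `≥ 1`) has a positive refinement: non-negative markings, not all zero, realizing
all valuations, which moreover are met by every nontrivial orientation-respecting loop. -/
theorem stmt14 (n : ℕ) [NeZero (2 * n)] (G : GaussDiagram n) (dA : Fin n → ℤ) (d : ℤ)
    (hadm : ∀ L : GaussDiagram.Loop G, L.Reduced → 1 ≤ G.loopClass dA d L) :
    ∃ y : ZMod (2 * n) → ℤ, G.IsRefinement dA d y ∧ (∀ e, 0 ≤ y e) ∧ y ≠ 0 ∧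
      ∀ L : GaussDiagram.Loop G, L.Reduced → L.Meets (fun e => (y e).toNat) := by
  set w := G.moveWeight dA d
  have hw := G.jumpsCancel_moveWeight dA d
  have hcl : G.ClosedWalksNonneg w := GaussDiagram.closedWalksNonneg_of_reduced hw fun L hL =>
    zero_le_one.trans ((hadm L hL).trans_eq (G.loopClass_eq_walkWeight dA d L))
  set f := G.potential w
  have hjump : ∀ p mv, G.MoveValid p mv → mv.isJump → f (G.target p mv) = f p + w p mv :=
    fun _ _ => GaussDiagram.potential_target_of_isJump hcl hw
  set y := fun e => f e - f (e + 1) + w e .circ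
  have hy : ∀ e, 0 ≤ y e := fun e => by
    have : f (e + 1) ≤ f e + w e .circ := GaussDiagram.potential_target_le hcl (mv := .circ) trivial
    simp only [y]
    linarith
  have hmeets : ∀ L : GaussDiagram.Loop G, L.Reduced → L.Meets fun e => (y e).toNat := by
    intro L hL
    by_contra hmiss
    have hzero := GaussDiagram.walkWeight_eq_of_not_meetsFrom f _ hjump (fun p hp => by
      linarith [hy p, Int.toNat_eq_zero.1 hp]) L.valid hmiss
    have := (hadm L hL).trans_eq (G.loopClass_eq_walkWeight dA d L)
    rw [hzero, L.closed, sub_self] at this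
    omega
  refine ⟨y, G.isRefinement_slack dA d f fun a => hjump _ (.jumpTH a) rfl trivial, hy,
    fun hy0 => ?_, hmeets⟩
  simpa [hy0, GaussDiagram.Loop.Meets, G.not_meetsFrom_zero] using hmeets _ G.circleLoop_reduced
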